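/- arXiv:1612.01300 — 2 statements merged into one kernel-verified Lean document; each statement's English description precedes it below -/
import Mathlib

section
/- Let G be a connected reductive complex algebraic group, Π = {λ₁,…,λ_m} dominant weights, V_Π = ⊕ V(λᵢ), and e ∈ V_Π with all projections π̂ᵢ(e) ≠ 0. If the orbit Ge is spherical, then the stabilizer of the point π(e) = ([e₁],…,[e_m]) ∈ ℙ(V(λ₁)) × ⋯ × ℙ(V(λ_m)) equals the normalizer N_G(G_e) of the stabilizer G_e. -/
/-!
If `g` multiplies every `eᵢ` by a nonzero scalar, then conjugation by `g` rescales the equations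
`h eᵢ = eᵢ` defining `G_e` by the same scalars, so `g` normalizes `G_e`. Conversely, if `g`
normalizes `G_e`, then `g eᵢ` is again `G_e`-fixed, hence lies on the line `ℂ eᵢ` of `G_e`-fixed
vectors; the scalar is nonzero because `g` acts invertibly.
-/

namespace Representation

variable {k G V : Type*} [Semifield k] [Group G] [AddCommMonoid V] [Module k V]
  (ρ : Representation k G V)

lemma inv_apply_eq_inv_smul_of_apply_eq_smul {g : G} {v : V} {c : k} (hc : c ≠ 0)
    (h : ρ g v = c • v) : ρ g⁻¹ v = c⁻¹ • v := by
  rw [inv_apply_eq_iff, map_smul, h, smul_smul, inv_mul_cancel₀ hc, one_smul]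

lemma conj_apply_eq_self_iff_of_apply_eq_smul {g : G} {v : V} {c : k} (hc : c ≠ 0)
    (h : ρ g v = c • v) (n : G) : ρ (g * n * g⁻¹) v = v ↔ ρ n v = v := by
  rw [map_mul, map_mul, Module.End.mul_apply, Module.End.mul_apply,
    ρ.inv_apply_eq_inv_smul_of_apply_eq_smul hc h, map_smul, map_smul, inv_smul_eq_iff₀ hc, ← h,
    (ρ.apply_bijective g).injective.eq_iff]

lemma apply_fixed_of_mem_normalizer {H : Subgroup G} {g : G}
    (hg : g ∈ Subgroup.normalizer (H : Set G)) {v : V}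
    (hv : ∀ h ∈ H, ρ h v = v) : ∀ h ∈ H, ρ h (ρ g v) = ρ g v := by
  intro h hh
  have hconj : g⁻¹ * h * g ∈ H := (Subgroup.mem_normalizer_iff''.mp hg h).mp hh
  calc ρ h (ρ g v) = ρ g (ρ (g⁻¹ * h * g) v) := by
        simp only [map_mul, Module.End.mul_apply, self_inv_apply]
    _ = ρ g v := by rw [hv _ hconj]

lemma exists_ne_zero_apply_eq_smul_of_mem_span {g : G} {v : V} (hv : v ≠ 0)
    (h : ρ g v ∈ Submodule.span k {v}) : ∃ c : k, c ≠ 0 ∧ ρ g v = c • v := by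
  obtain ⟨c, hc⟩ := Submodule.mem_span_singleton.mp h
  refine ⟨c, ?_, hc.symm⟩
  rintro rfl
  exact hv ((ρ.apply_bijective g).injective (by rw [← hc, zero_smul, map_zero]))

end Representation

/-- let `G` be a (connected reductive) group acting linearly on the simple
modules `V i` via `ρ i`, let `e = (e i)ᵢ` with all `e i ≠ 0`, and let `H = G_e` be the
common stabilizer.  The sphericality of the orbit `Ge` is used only through its
multiplicity-free consequence: for each `i` the space of `H`-fixed vectors in `V i`
is exactly the line `ℂ·eᵢ` (hypothesis `hsph`).  Then the stabilizer of the point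
`π(e) = ([e₁], …, [e_m])` in the product of projective spaces, i.e. the set of `g`
multiplying each `e i` by a nonzero scalar, equals the normalizer `N_G(G_e)`. -/
theorem stabilizer_of_projection_eq_normalizer
    {G : Type*} [Group G] {ι : Type*} {V : ι → Type*}
    [∀ i, AddCommGroup (V i)] [∀ i, Module ℂ (V i)]
    (ρ : ∀ i, Representation ℂ G (V i)) (e : ∀ i, V i) (he : ∀ i, e i ≠ 0)
    (H : Subgroup G) (hH : ∀ g : G, g ∈ H ↔ ∀ i, ρ i g (e i) = e i)
    (hsph : ∀ i, {v : V i | ∀ h ∈ H, ρ i h v = v} =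
      (Submodule.span ℂ {e i} : Submodule ℂ (V i))) :
    ∀ g : G, (∀ i, ∃ c : ℂ, c ≠ 0 ∧ ρ i g (e i) = c • e i) ↔ g ∈ Subgroup.normalizer (H : Set G) := by
  intro g
  constructor
  · intro hg
    refine Subgroup.mem_normalizer_iff.mpr fun n => ?_
    rw [hH, hH]
    refine forall_congr' fun i => ?_
    obtain ⟨c, hc, hce⟩ := hg i
    exact ((ρ i).conj_apply_eq_self_iff_of_apply_eq_smul hc hce n).symm
  · intro hg i
    have he_fixed : e i ∈ {v : V i | ∀ h ∈ H, ρ i h v = v} := by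
      rw [hsph i]
      exact Submodule.mem_span_singleton_self (e i)
    have hge_fixed : ρ i g (e i) ∈ {v : V i | ∀ h ∈ H, ρ i h v = v} :=
      (ρ i).apply_fixed_of_mem_normalizer hg he_fixed
    rw [hsph i] at hge_fixed
    exact (ρ i).exists_ne_zero_apply_eq_smul_of_mem_span (he i) hge_fixed
end

section
/- In the Hermitian symmetric setting, let Ke ⊂ 𝔭 = 𝔭₁ ⊕ 𝔭₂ be a nilpotent K-orbit and write e = e₁ + e₂ with eᵢ ∈ 𝔭ᵢ. Then ξ₁e₁ + ξ₂e₂ ∈ Ke for all ξ₁, ξ₂ ∈ ℂ*; in particular the orbit closure is a bicone with respect to the decomposition 𝔭 = 𝔭₁ ⊕ 𝔭₂. -/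
/- The torus elements `z b * t a` scale `e₁` by `a bᵐ` and `e₂` by `a b⁻ᵐ`; given `ξ₁, ξ₂`,
choose `b` with `b²ᵐ = ξ₁ / ξ₂` (possible since `ℂ` is algebraically closed and `m ≠ 0`)
and then `a = ξ₁ b⁻ᵐ`. -/

theorem IsAlgClosed.exists_units_zpow_eq {k : Type*} [Field k] [IsAlgClosed k] (u : kˣ) {n : ℤ}
    (hn : n ≠ 0) : ∃ b : kˣ, b ^ n = u := by
  obtain ⟨c, hc⟩ := IsAlgClosed.exists_pow_nat_eq (u : k) (Int.natAbs_pos.2 hn)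
  have hc₀ : c ≠ 0 := by
    rintro rfl
    exact u.ne_zero (hc ▸ zero_pow (Int.natAbs_ne_zero.2 hn))
  refine ⟨Units.mk0 c hc₀ ^ n.sign, ?_⟩
  rw [← zpow_mul, Int.sign_mul_self_eq_natAbs, zpow_natCast]
  exact Units.ext (by simpa using hc)

theorem exists_mul_zpow_eq_and_mul_zpow_neg_eq {G : Type*} [CommGroup G] {m : ℤ} {x y b : G}
    (hb : b ^ (2 * m) = x / y) : ∃ a : G, a * b ^ m = x ∧ a * b ^ (-m) = y := by
  refine ⟨x * b ^ (-m), by rw [mul_assoc, ← zpow_add, neg_add_cancel, zpow_zero, mul_one], ?_⟩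
  rw [mul_assoc, ← zpow_add, ← neg_add, ← two_mul, zpow_neg, hb, inv_div, mul_div_cancel]

/-- in the Hermitian symmetric setting, let `Ke ⊂ 𝔭 = 𝔭₁ ⊕ 𝔭₂` be a
nilpotent orbit and `e = e₁ + e₂`.  From the normal `sl₂`-triple one gets a one-parameter
subgroup `t` of `K` scaling both `e₁` and `e₂` by `ξ`, and the central torus `Z_K` gives
a one-parameter subgroup `z` scaling `e₁` by `ξ^m` and `e₂` by `ξ^{-m}` with `m ≠ 0`.
Then `ξ₁e₁ + ξ₂e₂ ∈ Ke` for all `ξ₁, ξ₂ ∈ ℂ*`; i.e. the orbit closure is a bicone. -/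
theorem orbit_is_bicone
    {K 𝔭 : Type*} [Group K] [AddCommGroup 𝔭] [Module ℂ 𝔭]
    (ρ : Representation ℂ K 𝔭) (e₁ e₂ : 𝔭)
    (t z : ℂˣ →* K) (m : ℤ) (hm : m ≠ 0)
    (ht₁ : ∀ ξ : ℂˣ, ρ (t ξ) e₁ = (ξ : ℂ) • e₁)
    (ht₂ : ∀ ξ : ℂˣ, ρ (t ξ) e₂ = (ξ : ℂ) • e₂)
    (hz₁ : ∀ ξ : ℂˣ, ρ (z ξ) e₁ = ((ξ ^ m : ℂˣ) : ℂ) • e₁)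
    (hz₂ : ∀ ξ : ℂˣ, ρ (z ξ) e₂ = ((ξ ^ (-m) : ℂˣ) : ℂ) • e₂) :
    ∀ ξ₁ ξ₂ : ℂˣ, ∃ g : K, ρ g (e₁ + e₂) = (ξ₁ : ℂ) • e₁ + (ξ₂ : ℂ) • e₂ := by
  intro ξ₁ ξ₂
  obtain ⟨b, hb⟩ := IsAlgClosed.exists_units_zpow_eq (ξ₁ / ξ₂) (mul_ne_zero two_ne_zero hm)
  obtain ⟨a, ha₁, ha₂⟩ := exists_mul_zpow_eq_and_mul_zpow_neg_eq hb
  refine ⟨z b * t a, ?_⟩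
  rw [map_mul, Module.End.mul_apply, map_add, map_add, ht₁, ht₂, map_smul, map_smul, hz₁, hz₂,
    smul_smul, smul_smul, ← Units.val_mul, ← Units.val_mul, ha₁, ha₂]
end
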